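/- If X is an additive process with distributions μ_t, and X is semi-Lévy with period p (i.e., X_{t+p} − X_{s+p} equals X_t − X_s in distribution for all 0 ≤ s ≤ t), then μ_{np+t} = μ_p^{*n} * μ_t for all n ∈ ℕ and t ≥ 0, where μ_p^{*n} denotes the n-fold convolution of μ_p. -/

import Mathlib

open MeasureTheory ProbabilityTheory

/-- `n`-fold convolution power of a measure on `ℝ`. -/
noncomputable def convPow (μ : MeasureTheory.Measure ℝ) : ℕ → MeasureTheory.Measure ℝ
  | 0 => MeasureTheory.Measure.dirac 0
  | n + 1 => MeasureTheory.Measure.conv (convPow μ n) μ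

/-!
Writing `X (n p + t) = X (n p) + (X (n p + t) - X (n p))` as a sum of independent terms gives
`μ (n p + t) = μ (n p) ∗ law (X (n p + t) - X (n p))`, and shifting the increment back by `n`
periods shows that its law is that of `X t - X 0`, i.e. of `X t` since `X 0 = 0` a.s.
The case `t = p` then yields `μ (n p) = μ p ^{*n}` by induction on `n`.
-/

open scoped NNReal

theorem ProbabilityTheory.IndepFun.map_eq_map_conv_map_sub {Ω M : Type*} [MeasurableSpace Ω]
    {P : Measure Ω} [IsFiniteMeasure P] [AddCommGroup M] [MeasurableSpace M] [MeasurableAdd₂ M]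
    [MeasurableSub₂ M] {f g : Ω → M} (hf : Measurable f) (hg : Measurable g)
    (hfg : IndepFun f (g - f) P) :
    P.map g = P.map f ∗ P.map (g - f) := by
  rw [← hfg.map_add_eq_map_conv_map hf (hg.sub hf), add_sub_cancel]

section RealIndexedProcess

variable {Ω : Type*} [MeasurableSpace Ω] {P : Measure Ω} {X : ℝ → Ω → ℝ} {p : ℝ}

/-- Mathlib's `HasIndepIncrements` quantifies over all monotone families of times, so a process
with independent increments on `[0, ∞)` is viewed as indexed by `ℝ≥0`. -/
theorem hasIndepIncrements_nnreal_of_nonneg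
    (hindep : ∀ (n : ℕ) (t : Fin (n + 1) → ℝ), Monotone t → (∀ i, 0 ≤ t i) →
      iIndepFun (fun i : Fin n => X (t i.succ) - X (t i.castSucc)) P) :
    HasIndepIncrements (fun t : ℝ≥0 => X t) P := fun n t ht =>
  hindep n (fun i => t i) (NNReal.coe_mono.comp ht) (fun i => (t i).2)

def HasPeriodicIncrementLaws (X : ℝ → Ω → ℝ) (P : Measure Ω) (p : ℝ) : Prop :=
  ∀ s t : ℝ, 0 ≤ s → s ≤ t → P.map (X (t + p) - X (s + p)) = P.map (X t - X s)

theorem HasPeriodicIncrementLaws.map_sub_add_nat_mul (hXp : HasPeriodicIncrementLaws X P p)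
    (hp : 0 ≤ p) (n : ℕ) {s t : ℝ} (hs : 0 ≤ s) (hst : s ≤ t) :
    P.map (X (t + n * p) - X (s + n * p)) = P.map (X t - X s) := by
  induction n with
  | zero => simp
  | succ n ih =>
    have hn : (0 : ℝ) ≤ s + n * p := by positivity
    rw [← ih, ← hXp _ _ hn (by linarith)]
    push_cast
    simp only [add_mul, one_mul, add_assoc]

theorem map_nat_mul_add_eq_conv [IsFiniteMeasure P] (hmeas : ∀ t, Measurable (X t))
    (h0 : ∀ᵐ ω ∂P, X 0 ω = 0) (hX : HasIndepIncrements (fun t : ℝ≥0 => X t) P)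
    (hXp : HasPeriodicIncrementLaws X P p) (hp : 0 ≤ p) (n : ℕ) {t : ℝ} (ht : 0 ≤ t) :
    P.map (X (n * p + t)) = P.map (X (n * p)) ∗ P.map (X t) := by
  have hnp : 0 ≤ (n : ℝ) * p := by positivity
  have hindep : IndepFun (X (n * p)) (X (n * p + t) - X (n * p)) P :=
    hX.indepFun_eval_sub (r := 0) (s := ⟨_, hnp⟩) (t := ⟨_, by positivity⟩) zero_le
      (show n * p ≤ n * p + t by linarith) h0
  have hinc : P.map (X (n * p + t) - X (n * p)) = P.map (X t) := by
    have hsub0 : P.map (X t - X 0) = P.map (X t) :=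
      Measure.map_congr (by filter_upwards [h0] with ω hω; simp [hω])
    rw [← hsub0]
    simpa [add_comm t] using hXp.map_sub_add_nat_mul hp n le_rfl ht
  rw [hindep.map_eq_map_conv_map_sub (hmeas _) (hmeas _), hinc]

theorem map_nat_mul_eq_convPow [IsProbabilityMeasure P] (hmeas : ∀ t, Measurable (X t))
    (h0 : ∀ᵐ ω ∂P, X 0 ω = 0) (hX : HasIndepIncrements (fun t : ℝ≥0 => X t) P)
    (hXp : HasPeriodicIncrementLaws X P p) (hp : 0 ≤ p) (n : ℕ) :
    P.map (X (n * p)) = convPow (P.map (X p)) n := by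
  induction n with
  | zero => simp [convPow, Measure.map_congr h0]
  | succ n ih =>
    rw [Nat.cast_succ, add_one_mul, map_nat_mul_add_eq_conv hmeas h0 hX hXp hp n hp, ih]
    rfl

end RealIndexedProcess

/-- If `X` is an additive process (starting at `0`, with independent
increments) with laws `μ t = law of X t`, and `X` is semi-Lévy with period `p`
(`X (t+p) - X (s+p)` equals `X t - X s` in distribution for all `0 ≤ s ≤ t`), then
`μ (n p + t) = μ p ^{*n} ∗ μ t` for all `n ∈ ℕ` and `t ≥ 0`. -/
theorem semiLevy_law_conv
    {Ω : Type*} [MeasurableSpace Ω] (P : Measure Ω) [IsProbabilityMeasure P]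
    (X : ℝ → Ω → ℝ) (p : ℝ) (hp : 0 < p)
    (hmeas : ∀ t, Measurable (X t))
    (h0 : ∀ᵐ ω ∂P, X 0 ω = 0)
    (hindep : ∀ (n : ℕ) (t : Fin (n + 1) → ℝ), Monotone t → (∀ i, 0 ≤ t i) →
      iIndepFun
        (fun i : Fin n => fun ω => X (t i.succ) ω - X (t i.castSucc) ω) P)
    (hsemi : ∀ s t : ℝ, 0 ≤ s → s ≤ t →
      Measure.map (fun ω => X (t + p) ω - X (s + p) ω) P
        = Measure.map (fun ω => X t ω - X s ω) P)
    (μ : ℝ → Measure ℝ) (hμ : ∀ t, μ t = Measure.map (X t) P) :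
    ∀ (n : ℕ) (t : ℝ), 0 ≤ t →
      μ (n * p + t) = MeasureTheory.Measure.conv (convPow (μ p) n) (μ t) := by
  intro n t ht
  have hX := hasIndepIncrements_nnreal_of_nonneg hindep
  simp only [hμ]
  rw [map_nat_mul_add_eq_conv hmeas h0 hX hsemi hp.le n ht,
    map_nat_mul_eq_convPow hmeas h0 hX hsemi hp.le n]
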